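/- (Clopper–Pearson coverage, lower bound): Let X ~ Bin(n, p) with p ∈ (0,1], and define p̲(X) = sup{ q ∈ [0,1] : P(Bin(n,q) ≥ X) ≤ α }, with p̲ = 0 when X = 0. Then P(p̲(X) > p) ≤ α. -/

import Mathlib

/-!
If `p < p̲(x)`, some `q ∈ (p, 1]` has `P(Bin(n,q) ≥ x) ≤ α`; as the binomial tail is nondecreasing
in the success probability, also `P(Bin(n,p) ≥ x) ≤ α`. So `p < p̲(X)` forces `X ≥ k*`, the least
`k` with `P(Bin(n,p) ≥ k) ≤ α`, an event of probability `P(Bin(n,p) ≥ k*) ≤ α`. The tail is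
monotone because its derivative telescopes to `k C(n,k) q^(k-1) (1-q)^(n-k) ≥ 0`.
-/

open MeasureTheory

/-- Upper tail of the binomial distribution: `P(Bin(n,q) ≥ k)`. -/
noncomputable def binTail (n k : ℕ) (q : ℝ) : ℝ :=
  ∑ j ∈ Finset.Icc k n, (n.choose j : ℝ) * q ^ j * (1 - q) ^ (n - j)

/-- Clopper–Pearson one-sided lower confidence bound for an observed count `x`. -/
noncomputable def cpLower (n : ℕ) (α : ℝ) (x : ℕ) : ℝ :=
  if x = 0 then 0 else sSup {q ∈ Set.Icc (0:ℝ) 1 | binTail n x q ≤ α}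

noncomputable def binTailDeriv (n k : ℕ) (q : ℝ) : ℝ :=
  k * n.choose k * q ^ (k - 1) * (1 - q) ^ (n - k)

lemma binTailDeriv_of_lt {n k : ℕ} (h : n < k) (q : ℝ) : binTailDeriv n k q = 0 := by
  simp [binTailDeriv, Nat.choose_eq_zero_of_lt h]

lemma hasDerivAt_binomial_term (n j : ℕ) (q : ℝ) :
    HasDerivAt (fun q : ℝ => (n.choose j : ℝ) * q ^ j * (1 - q) ^ (n - j))
      (binTailDeriv n j q - binTailDeriv n (j + 1) q) q := by
  have hpow : HasDerivAt (fun q : ℝ => (1 - q) ^ (n - j))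
      ((n - j : ℕ) * (1 - q) ^ (n - j - 1) * (-1)) q :=
    ((hasDerivAt_id q).const_sub 1).pow (n - j)
  refine (((hasDerivAt_pow j q).const_mul (n.choose j : ℝ)).mul hpow).congr_deriv ?_
  have hchoose : (n.choose (j + 1) : ℝ) * (j + 1 : ℕ) = n.choose j * (n - j : ℕ) := by
    exact_mod_cast Nat.choose_succ_right_eq n j
  rw [binTailDeriv, binTailDeriv, Nat.add_sub_cancel, Nat.sub_succ']
  push_cast at hchoose ⊢
  linear_combination q ^ j * (1 - q) ^ (n - j - 1) * hchoose

lemma hasDerivAt_binTail (n k : ℕ) (q : ℝ) :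
    HasDerivAt (binTail n k) (binTailDeriv n k q) q := by
  refine (HasDerivAt.fun_sum fun j _ => hasDerivAt_binomial_term n j q).congr_deriv ?_
  rcases le_or_gt k n with hkn | hnk
  · simp_rw [← neg_sub (binTailDeriv n (_ + 1) q)]
    rw [Finset.sum_neg_distrib, Finset.sum_Icc_sub hkn fun j => binTailDeriv n j q,
      binTailDeriv_of_lt n.lt_succ_self]
    ring
  · rw [Finset.Icc_eq_empty_of_lt hnk, Finset.sum_empty, binTailDeriv_of_lt hnk]

lemma binTail_monotoneOn (n k : ℕ) : MonotoneOn (binTail n k) (Set.Icc 0 1) := by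
  have hdiff : Differentiable ℝ (binTail n k) := fun q =>
    (hasDerivAt_binTail n k q).differentiableAt
  refine monotoneOn_of_deriv_nonneg (convex_Icc 0 1) hdiff.continuous.continuousOn
    hdiff.differentiableOn fun q hq => ?_
  rw [interior_Icc] at hq
  have hq0 : 0 ≤ q := hq.1.le
  have hq1 : 0 ≤ 1 - q := sub_nonneg.2 hq.2.le
  rw [(hasDerivAt_binTail n k q).deriv, binTailDeriv]
  positivity

lemma binTail_of_lt {n k : ℕ} (h : n < k) (q : ℝ) : binTail n k q = 0 := by
  rw [binTail, Finset.Icc_eq_empty_of_lt h, Finset.sum_empty]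

lemma binTail_le_of_lt_cpLower {n x : ℕ} {α p : ℝ} (hp : 0 ≤ p) (h : p < cpLower n α x) :
    binTail n x p ≤ α := by
  have hx : x ≠ 0 := by
    rintro rfl
    rw [cpLower, if_pos rfl] at h
    linarith
  rw [cpLower, if_neg hx] at h
  have hne : {q ∈ Set.Icc (0 : ℝ) 1 | binTail n x q ≤ α}.Nonempty := by
    by_contra hempty
    rw [Set.not_nonempty_iff_eq_empty.1 hempty, Real.sSup_empty] at h
    linarith
  obtain ⟨q, ⟨hq, hqα⟩, hpq⟩ := exists_lt_of_lt_csSup hne h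
  exact (binTail_monotoneOn n x ⟨hp, hpq.le.trans hq.2⟩ hq hpq.le).trans hqα

lemma measure_le_le_ofReal_binTail {Ω : Type*} [MeasurableSpace Ω] (P : Measure Ω)
    {n : ℕ} {p : ℝ} (hp : p ∈ Set.Icc (0 : ℝ) 1) (X : Ω → ℕ)
    (hX : ∀ k : ℕ, P {ω | X ω = k} =
      ENNReal.ofReal ((n.choose k : ℝ) * p ^ k * (1 - p) ^ (n - k))) (k : ℕ) :
    P {ω | k ≤ X ω} ≤ ENNReal.ofReal (binTail n k p) := by
  have hcover : {ω | k ≤ X ω} ⊆ ⋃ j, {ω | X ω = k + j} := fun ω hω =>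
    Set.mem_iUnion.2 ⟨X ω - k, by simp only [Set.mem_ofPred_eq] at hω ⊢; omega⟩
  have hp1 : 0 ≤ 1 - p := sub_nonneg.2 hp.2
  have hp0 := hp.1
  calc P {ω | k ≤ X ω}
      ≤ ∑' j, P {ω | X ω = k + j} := (measure_mono hcover).trans (measure_iUnion_le _)
    _ = ∑ j ∈ Finset.range (n + 1 - k),
          ENNReal.ofReal ((n.choose (k + j) : ℝ) * p ^ (k + j) * (1 - p) ^ (n - (k + j))) := by
        simp only [hX]
        refine tsum_eq_sum fun j hj => ?_
        rw [Finset.mem_range, not_lt] at hj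
        simp [Nat.choose_eq_zero_of_lt (show n < k + j by omega)]
    _ = ENNReal.ofReal (binTail n k p) := by
        rw [← ENNReal.ofReal_sum_of_nonneg fun j _ => by positivity, binTail,
          ← Finset.Ico_add_one_right_eq_Icc, Finset.sum_Ico_eq_sum_range]

theorem stmt10_general {Ω : Type*} [MeasurableSpace Ω] (P : Measure Ω)
    (n : ℕ) (p : ℝ) (hp : p ∈ Set.Ioc (0:ℝ) 1)
    (α : ℝ) (hα : α ∈ Set.Ioo (0:ℝ) 1) (X : Ω → ℕ)
    (hX : ∀ k : ℕ, P {ω | X ω = k} =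
      ENNReal.ofReal ((n.choose k : ℝ) * p ^ k * (1 - p) ^ (n - k))) :
    P {ω | p < cpLower n α (X ω)} ≤ ENNReal.ofReal α := by
  have hexists : ∃ k, binTail n k p ≤ α :=
    ⟨n + 1, by rw [binTail_of_lt n.lt_succ_self]; exact hα.1.le⟩
  have hsub : {ω | p < cpLower n α (X ω)} ⊆ {ω | Nat.find hexists ≤ X ω} := fun ω hω =>
    Nat.find_min' hexists (binTail_le_of_lt_cpLower hp.1.le hω)
  calc P {ω | p < cpLower n α (X ω)}
      ≤ ENNReal.ofReal (binTail n (Nat.find hexists) p) :=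
        (measure_mono hsub).trans
          (measure_le_le_ofReal_binTail P (Set.Ioc_subset_Icc_self hp) X hX _)
    _ ≤ ENNReal.ofReal α := ENNReal.ofReal_le_ofReal (Nat.find_spec hexists)

theorem stmt10 {Ω : Type*} [MeasurableSpace Ω] (P : Measure Ω) [IsProbabilityMeasure P]
    (n : ℕ) (hn : 1 ≤ n) (p : ℝ) (hp : p ∈ Set.Ioc (0:ℝ) 1)
    (α : ℝ) (hα : α ∈ Set.Ioo (0:ℝ) 1) (X : Ω → ℕ)
    (hX : ∀ k : ℕ, P {ω | X ω = k} =
      ENNReal.ofReal ((n.choose k : ℝ) * p ^ k * (1 - p) ^ (n - k))) :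
    P {ω | p < cpLower n α (X ω)} ≤ ENNReal.ofReal α :=
  stmt10_general P n p hp α hα X hX
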